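/- Let m be an odd positive integer, B ∈ 𝒯 with B ≠ 0, and d ∈ 𝔽_q. The number of quadruples (X,Y,Z,W) ∈ 𝒯⁴ satisfying X + Y + Z + W = 2B in R and x³ + y³ + z³ + w³ = b³·d in 𝔽_q equals: 3·2^m if d = 0; 0 if d ∈ M_0 ∪ M_1; and 6·2^m if d ∈ M_3. -/

import Mathlib

open Polynomial

/-- The residue field `𝔽_q = R/2R` of the Galois ring `R = (ℤ/4ℤ)[x]/(f)`. -/
abbrev ResField (f : Polynomial (ZMod 4)) : Type :=
  AdjoinRoot f ⧸ (Ideal.span {2} : Ideal (AdjoinRoot f))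

/-- Reduction modulo 2, `μ : R → R/2R`. -/
noncomputable def muRed (f : Polynomial (ZMod 4)) : AdjoinRoot f →+* ResField f :=
  Ideal.Quotient.mk _

/-- The number of roots of `z³ + z + d` in `𝔽_q`. -/
noncomputable def cubicRoots (f : Polynomial (ZMod 4)) (d : ResField f) : ℕ :=
  Nat.card {z : ResField f // z ^ 3 + z + d = 0}

/-!
Squaring a lift modulo `2` kills its ambiguity (`(r + 2s)² = r²` since `4 = 0`), so `τ x := (any
lift of x) ^ q` is the Teichmüller lift, and comparing `(τ a + τ b)²` with `τ (a + b)²` gives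
`τ (a²) + τ (b²) = τ ((a + b)²) + 2 τ (a b)`. Since every element of `𝔽_q` is a square, summing
this over four terms shows that for Teichmüller `X, Y, Z, W` we have `X + Y + Z + W = 2B` exactly
when `x + y + z + w = 0` and `e₂(x, y, z, w) = b²`.

In characteristic `2` these force `w = x + y + z`, and with `s = x + y`, `t = y + z` the two
conditions and the cube condition become `s² + st + t² = b²`, `st(s + t) = b³d`, with `y` free.
For `d = 0` the solutions are `(b, b), (0, b), (b, 0)`; for `d ≠ 0` they correspond, via
`(s, t) ↦ (s, s + t)`, to ordered pairs of distinct roots of `z³ + b²z + b³d`, i.e. (`z = bu`)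
of `u³ + u + d`.
-/

open Function

/-- Reduction modulo `2` on a ring such as `GR(4, m)`: `4 = 0`, and both the kernel of `μ` and
the annihilator of `2` are `2R`. -/
structure IsReductionModTwo {R K : Type*} [CommRing R] [CommRing K] (μ : R →+* K) : Prop where
  four_eq_zero : (4 : R) = 0
  surjective : Surjective μ
  two_dvd_of_map_eq_zero : ∀ r, μ r = 0 → 2 ∣ r
  two_dvd_of_two_mul_eq_zero : ∀ r : R, 2 * r = 0 → 2 ∣ r

namespace IsReductionModTwo

variable {R K : Type*} [CommRing R] [CommRing K] {μ : R →+* K}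

lemma sq_eq_sq_of_map_eq (hμ : IsReductionModTwo μ) {r r' : R} (h : μ r = μ r') :
    r ^ 2 = r' ^ 2 := by
  obtain ⟨s, hs⟩ := hμ.two_dvd_of_map_eq_zero (r - r') (by rw [map_sub, h, sub_self])
  linear_combination (r + r' + 2 * s) * hs + (s * r' + s ^ 2) * hμ.four_eq_zero

lemma pow_eq_pow_of_map_eq (hμ : IsReductionModTwo μ) {n : ℕ} (hn : Even n) {r r' : R}
    (h : μ r = μ r') : r ^ n = r' ^ n := by
  obtain ⟨k, rfl⟩ := hn
  rw [← two_mul, pow_mul, pow_mul, hμ.sq_eq_sq_of_map_eq h]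

lemma two_mul_eq_two_mul_of_map_eq (hμ : IsReductionModTwo μ) {r r' : R} (h : μ r = μ r') :
    2 * r = 2 * r' := by
  obtain ⟨s, hs⟩ := hμ.two_dvd_of_map_eq_zero (r - r') (by rw [map_sub, h, sub_self])
  linear_combination 2 * hs + s * hμ.four_eq_zero

lemma map_eq_of_two_mul_eq_two_mul [CharP K 2] (hμ : IsReductionModTwo μ) {r r' : R}
    (h : 2 * r = 2 * r') : μ r = μ r' := by
  obtain ⟨s, hs⟩ := hμ.two_dvd_of_two_mul_eq_zero (r - r') (by linear_combination h)
  rw [← sub_eq_zero, ← map_sub, hs, map_mul, map_ofNat, CharTwo.two_eq_zero, zero_mul]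

end IsReductionModTwo

lemma FiniteField.pow_natCard {K : Type*} [GroupWithZero K] [Finite K] (x : K) :
    x ^ Nat.card K = x := by
  have := Fintype.ofFinite K
  rw [Nat.card_eq_fintype_card, FiniteField.pow_card]

lemma even_natCard_of_charP_two (A : Type*) [Ring A] [Finite A] [CharP A 2] :
    Even (Nat.card A) := by
  have := Fintype.ofFinite A
  rw [even_iff_two_dvd, ← CharP.cast_eq_zero_iff A 2, Nat.card_eq_fintype_card,
    Nat.cast_card_eq_zero]

section Teichmuller

variable {R K : Type*} [CommRing R] [Field K] [Finite K] {μ : R →+* K}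

/-- `X ^ q` only depends on `X` modulo `2`, so the choice of preimage made by `invFun` does not
matter. -/
noncomputable def teichmullerLift (μ : R →+* K) (x : K) : R :=
  invFun μ x ^ Nat.card K

lemma IsReductionModTwo.map_teichmullerLift (hμ : IsReductionModTwo μ) (x : K) :
    μ (teichmullerLift μ x) = x := by
  rw [teichmullerLift, map_pow, invFun_eq (hμ.surjective x), FiniteField.pow_natCard]

lemma IsReductionModTwo.two_mul_teichmullerLift_add (hμ : IsReductionModTwo μ) (x y : K) :
    2 * teichmullerLift μ (x + y) = 2 * teichmullerLift μ x + 2 * teichmullerLift μ y := by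
  rw [← mul_add]
  exact hμ.two_mul_eq_two_mul_of_map_eq (by simp [hμ.map_teichmullerLift])

variable [CharP K 2]

namespace IsReductionModTwo

lemma teichmullerLift_map (hμ : IsReductionModTwo μ) {X : R} (hX : X ^ Nat.card K = X) :
    teichmullerLift μ (μ X) = X := by
  rw [teichmullerLift, hμ.pow_eq_pow_of_map_eq (even_natCard_of_charP_two K)
    (invFun_eq (hμ.surjective (μ X))), hX]

lemma teichmullerLift_pow_natCard (hμ : IsReductionModTwo μ) (x : K) :
    teichmullerLift μ x ^ Nat.card K = teichmullerLift μ x :=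
  hμ.pow_eq_pow_of_map_eq (even_natCard_of_charP_two K)
    ((hμ.map_teichmullerLift x).trans (invFun_eq (hμ.surjective x)).symm)

lemma teichmullerLift_zero (hμ : IsReductionModTwo μ) : teichmullerLift μ (0 : K) = 0 := by
  simpa using hμ.teichmullerLift_map (X := 0) (zero_pow Nat.card_pos.ne')

lemma teichmullerLift_sq (hμ : IsReductionModTwo μ) (x : K) :
    teichmullerLift μ (x ^ 2) = teichmullerLift μ x ^ 2 := by
  have := hμ.teichmullerLift_map (X := teichmullerLift μ x ^ 2)
    (by rw [← pow_mul, mul_comm, pow_mul, hμ.teichmullerLift_pow_natCard])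
  rwa [map_pow, hμ.map_teichmullerLift] at this

lemma eq_of_two_mul_teichmullerLift_eq (hμ : IsReductionModTwo μ) {x y : K}
    (h : 2 * teichmullerLift μ x = 2 * teichmullerLift μ y) : x = y := by
  simpa [hμ.map_teichmullerLift] using hμ.map_eq_of_two_mul_eq_two_mul h

lemma teichmullerLift_sq_add_sq (hμ : IsReductionModTwo μ) (a b : K) :
    teichmullerLift μ (a ^ 2) + teichmullerLift μ (b ^ 2) =
      teichmullerLift μ ((a + b) ^ 2) + 2 * teichmullerLift μ (a * b) := by
  have hsq : (teichmullerLift μ a + teichmullerLift μ b) ^ 2 = teichmullerLift μ (a + b) ^ 2 :=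
    hμ.sq_eq_sq_of_map_eq (by simp [hμ.map_teichmullerLift])
  have hmul : 2 * (teichmullerLift μ a * teichmullerLift μ b) = 2 * teichmullerLift μ (a * b) :=
    hμ.two_mul_eq_two_mul_of_map_eq (by simp [hμ.map_teichmullerLift])
  rw [hμ.teichmullerLift_sq, hμ.teichmullerLift_sq, hμ.teichmullerLift_sq]
  linear_combination hsq - hmul - teichmullerLift μ (a * b) * hμ.four_eq_zero

lemma teichmullerLift_sq_add_sq_add_sq_add_sq (hμ : IsReductionModTwo μ) (a b c e : K) :
    teichmullerLift μ (a ^ 2) + teichmullerLift μ (b ^ 2) + teichmullerLift μ (c ^ 2) +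
        teichmullerLift μ (e ^ 2) =
      teichmullerLift μ ((a + b + c + e) ^ 2) +
        2 * teichmullerLift μ (a * b + a * c + a * e + b * c + b * e + c * e) := by
  have hab := hμ.teichmullerLift_sq_add_sq a b
  have habc := hμ.teichmullerLift_sq_add_sq (a + b) c
  have habce := hμ.teichmullerLift_sq_add_sq (a + b + c) e
  have h₁ := hμ.two_mul_teichmullerLift_add (a * b) ((a + b) * c)
  have h₂ := hμ.two_mul_teichmullerLift_add (a * b + (a + b) * c) ((a + b + c) * e)
  rw [show a * b + a * c + a * e + b * c + b * e + c * e = a * b + (a + b) * c + (a + b + c) * e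
    by ring]
  linear_combination hab + habc + habce - h₁ - h₂

lemma teichmullerLift_add_four_eq_two_mul_iff (hμ : IsReductionModTwo μ) (x y z w b : K) :
    teichmullerLift μ x + teichmullerLift μ y + teichmullerLift μ z + teichmullerLift μ w =
        2 * teichmullerLift μ b ↔
      x + y + z + w = 0 ∧ x * y + x * z + x * w + y * z + y * w + z * w = b ^ 2 := by
  have hsqrt (u : K) : ∃ a, a ^ 2 = u := surjective_frobenius K 2 u
  obtain ⟨a₁, rfl⟩ := hsqrt x
  obtain ⟨a₂, rfl⟩ := hsqrt y
  obtain ⟨a₃, rfl⟩ := hsqrt z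
  obtain ⟨a₄, rfl⟩ := hsqrt w
  have hσ : a₁ ^ 2 + a₂ ^ 2 + a₃ ^ 2 + a₄ ^ 2 = (a₁ + a₂ + a₃ + a₄) ^ 2 := by
    simp only [CharTwo.add_sq]
  have he₂ : a₁ ^ 2 * a₂ ^ 2 + a₁ ^ 2 * a₃ ^ 2 + a₁ ^ 2 * a₄ ^ 2 + a₂ ^ 2 * a₃ ^ 2 +
      a₂ ^ 2 * a₄ ^ 2 + a₃ ^ 2 * a₄ ^ 2 =
        (a₁ * a₂ + a₁ * a₃ + a₁ * a₄ + a₂ * a₃ + a₂ * a₄ + a₃ * a₄) ^ 2 := by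
    simp only [CharTwo.add_sq, mul_pow]
  rw [hμ.teichmullerLift_sq_add_sq_add_sq_add_sq, hσ, he₂]
  constructor
  · intro h
    have hs : (a₁ + a₂ + a₃ + a₄) ^ 2 = 0 := by
      simpa [hμ.map_teichmullerLift, map_ofNat, CharTwo.two_eq_zero] using congrArg μ h
    rw [hs, hμ.teichmullerLift_zero, zero_add] at h
    exact ⟨hs, by rw [hμ.eq_of_two_mul_teichmullerLift_eq h]⟩
  · rintro ⟨hs, hb⟩
    rw [hs, hμ.teichmullerLift_zero, zero_add, frobenius_inj K 2 hb]

lemma add_four_eq_two_mul_iff (hμ : IsReductionModTwo μ) {X Y Z W B : R}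
    (hX : X ^ Nat.card K = X) (hY : Y ^ Nat.card K = Y) (hZ : Z ^ Nat.card K = Z)
    (hW : W ^ Nat.card K = W) (hB : B ^ Nat.card K = B) :
    X + Y + Z + W = 2 * B ↔ μ X + μ Y + μ Z + μ W = 0 ∧
      μ X * μ Y + μ X * μ Z + μ X * μ W + μ Y * μ Z + μ Y * μ W + μ Z * μ W = μ B ^ 2 := by
  rw [← hμ.teichmullerLift_add_four_eq_two_mul_iff, hμ.teichmullerLift_map hX,
    hμ.teichmullerLift_map hY, hμ.teichmullerLift_map hZ, hμ.teichmullerLift_map hW,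
    hμ.teichmullerLift_map hB]

noncomputable def teichmullerQuadruplesEquiv (hμ : IsReductionModTwo μ) {B : R}
    (hB : B ^ Nat.card K = B) (P : K → K → K → K → Prop) :
    {t : R × R × R × R // (t.1 ^ Nat.card K = t.1 ∧ t.2.1 ^ Nat.card K = t.2.1 ∧
        t.2.2.1 ^ Nat.card K = t.2.2.1 ∧ t.2.2.2 ^ Nat.card K = t.2.2.2) ∧
      t.1 + t.2.1 + t.2.2.1 + t.2.2.2 = 2 * B ∧ P (μ t.1) (μ t.2.1) (μ t.2.2.1) (μ t.2.2.2)} ≃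
    {v : K × K × K × K // v.1 + v.2.1 + v.2.2.1 + v.2.2.2 = 0 ∧
      v.1 * v.2.1 + v.1 * v.2.2.1 + v.1 * v.2.2.2 + v.2.1 * v.2.2.1 + v.2.1 * v.2.2.2 +
        v.2.2.1 * v.2.2.2 = μ B ^ 2 ∧ P v.1 v.2.1 v.2.2.1 v.2.2.2} where
  toFun t :=
    have h := (hμ.add_four_eq_two_mul_iff t.2.1.1 t.2.1.2.1 t.2.1.2.2.1 t.2.1.2.2.2 hB).1 t.2.2.1
    ⟨(μ t.1.1, μ t.1.2.1, μ t.1.2.2.1, μ t.1.2.2.2), h.1, h.2, t.2.2.2⟩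
  invFun v :=
    have hT := hμ.teichmullerLift_pow_natCard
    ⟨(teichmullerLift μ v.1.1, teichmullerLift μ v.1.2.1, teichmullerLift μ v.1.2.2.1,
        teichmullerLift μ v.1.2.2.2), ⟨hT _, hT _, hT _, hT _⟩,
      (hμ.add_four_eq_two_mul_iff (hT _) (hT _) (hT _) (hT _) hB).2
        (by simpa only [hμ.map_teichmullerLift] using ⟨v.2.1, v.2.2.1⟩),
      by simpa only [hμ.map_teichmullerLift] using v.2.2.2⟩
  left_inv t := by
    obtain ⟨⟨X, Y, Z, W⟩, ⟨hX, hY, hZ, hW⟩, -⟩ := t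
    ext <;> simp [hμ.teichmullerLift_map, hX, hY, hZ, hW]
  right_inv v := by
    ext <;> simp [hμ.map_teichmullerLift]

end IsReductionModTwo

end Teichmuller

lemma Nat.card_subtype_fst_ne_snd (α : Type*) [Finite α] :
    Nat.card {r : α × α // r.1 ≠ r.2} = Nat.card α * Nat.card α - Nat.card α := by
  classical
  have := Fintype.ofFinite α
  have hmem (r : α × α) : r.1 ≠ r.2 ↔ r ∈ (Finset.univ : Finset α).offDiag := by simp
  rw [Nat.card_congr (Equiv.subtypeEquivRight hmem), Nat.card_eq_fintype_card, Fintype.card_coe,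
    Finset.offDiag_card, Finset.card_univ, Nat.card_eq_fintype_card]

lemma card_roots_cubic_scale {K : Type*} [Field K] {b : K} (hb : b ≠ 0) (d : K) :
    Nat.card {z : K // z ^ 3 + b ^ 2 * z + b ^ 3 * d = 0} =
      Nat.card {u : K // u ^ 3 + u + d = 0} :=
  Nat.card_congr <| (Equiv.subtypeEquiv (Equiv.mulLeft₀ b hb) fun u ↦ by
    rw [Equiv.mulLeft₀_apply,
      show (b * u) ^ 3 + b ^ 2 * (b * u) + b ^ 3 * d = b ^ 3 * (u ^ 3 + u + d) by ring,
      mul_eq_zero, or_iff_right (pow_ne_zero 3 hb)]).symm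

section CharTwo

variable {K : Type*} [CommRing K] [CharP K 2]

lemma pair_eqs_of_quadruple_eqs {x y z w c e : K} (hσ : x + y + z + w = 0)
    (hc : x * y + x * z + x * w + y * z + y * w + z * w = c)
    (he : x ^ 3 + y ^ 3 + z ^ 3 + w ^ 3 = e) :
    (x + y) ^ 2 + (x + y) * (y + z) + (y + z) ^ 2 = c ∧
      (x + y) * (y + z) * (x + y + (y + z)) = e := by
  have h2 : (2 : K) = 0 := CharTwo.two_eq_zero
  obtain rfl : w = x + y + z := by linear_combination hσ - (x + y + z) * h2
  exact ⟨by linear_combination hc + (y ^ 2 - x * z) * h2,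
    by linear_combination he - (x ^ 3 + z ^ 3 + x ^ 2 * y + x ^ 2 * z + x * y * z + x * z ^ 2
      + y * z ^ 2) * h2⟩

lemma quadruple_eqs_of_pair_eqs {s t y c e : K} (hc : s ^ 2 + s * t + t ^ 2 = c)
    (he : s * t * (s + t) = e) :
    s + y + y + (t + y) + (s + t + y) = 0 ∧
    (s + y) * y + (s + y) * (t + y) + (s + y) * (s + t + y) + y * (t + y) + y * (s + t + y) +
      (t + y) * (s + t + y) = c ∧
    (s + y) ^ 3 + y ^ 3 + (t + y) ^ 3 + (s + t + y) ^ 3 = e := by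
  have h2 : (2 : K) = 0 := CharTwo.two_eq_zero
  exact ⟨by linear_combination (s + t + 2 * y) * h2,
    by linear_combination hc + (3 * s * y + s * t + 3 * y * t + 3 * y ^ 2) * h2,
    by linear_combination he + (3 * s * y * t + 3 * s * y ^ 2 + s * t ^ 2 + 3 * s ^ 2 * y
      + s ^ 2 * t + s ^ 3 + 3 * y * t ^ 2 + 3 * y ^ 2 * t + 2 * y ^ 3 + t ^ 3) * h2⟩

def quadruplesEquivPairs (c e : K) :
    {v : K × K × K × K // v.1 + v.2.1 + v.2.2.1 + v.2.2.2 = 0 ∧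
      v.1 * v.2.1 + v.1 * v.2.2.1 + v.1 * v.2.2.2 + v.2.1 * v.2.2.1 + v.2.1 * v.2.2.2 +
        v.2.2.1 * v.2.2.2 = c ∧
      v.1 ^ 3 + v.2.1 ^ 3 + v.2.2.1 ^ 3 + v.2.2.2 ^ 3 = e} ≃
    {p : K × K // p.1 ^ 2 + p.1 * p.2 + p.2 ^ 2 = c ∧ p.1 * p.2 * (p.1 + p.2) = e} × K where
  toFun v := (⟨(v.1.1 + v.1.2.1, v.1.2.1 + v.1.2.2.1),
    pair_eqs_of_quadruple_eqs v.2.1 v.2.2.1 v.2.2.2⟩, v.1.2.1)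
  invFun p := ⟨(p.1.1.1 + p.2, p.2, p.1.1.2 + p.2, p.1.1.1 + p.1.1.2 + p.2),
    quadruple_eqs_of_pair_eqs p.1.2.1 p.1.2.2⟩
  left_inv := by
    rintro ⟨⟨x, y, z, w⟩, hσ, -, -⟩
    have h2 : (2 : K) = 0 := CharTwo.two_eq_zero
    ext
    · linear_combination y * h2
    · rfl
    · linear_combination y * h2
    · linear_combination hσ + (y - w) * h2
  right_inv := by
    rintro ⟨⟨⟨s, t⟩, -, -⟩, y⟩
    have h2 : (2 : K) = 0 := CharTwo.two_eq_zero
    ext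
    · linear_combination y * h2
    · linear_combination y * h2
    · rfl

lemma card_quadruples (c e : K) :
    Nat.card {v : K × K × K × K // v.1 + v.2.1 + v.2.2.1 + v.2.2.2 = 0 ∧
      v.1 * v.2.1 + v.1 * v.2.2.1 + v.1 * v.2.2.2 + v.2.1 * v.2.2.1 + v.2.1 * v.2.2.2 +
        v.2.2.1 * v.2.2.2 = c ∧
      v.1 ^ 3 + v.2.1 ^ 3 + v.2.2.1 ^ 3 + v.2.2.2 ^ 3 = e} =
    Nat.card {p : K × K // p.1 ^ 2 + p.1 * p.2 + p.2 ^ 2 = c ∧ p.1 * p.2 * (p.1 + p.2) = e} *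
      Nat.card K := by
  rw [Nat.card_congr (quadruplesEquivPairs c e), Nat.card_prod]

lemma roots_of_pair_eqs {s t c e : K} (hc : s ^ 2 + s * t + t ^ 2 = c)
    (he : s * t * (s + t) = e) :
    s ^ 3 + c * s + e = 0 ∧ (s + t) ^ 3 + c * (s + t) + e = 0 := by
  have h2 : (2 : K) = 0 := CharTwo.two_eq_zero
  exact ⟨by linear_combination -s * hc - he + (s ^ 3 + s ^ 2 * t + s * t ^ 2) * h2,
    by linear_combination -(s + t) * hc - he + (s + t) ^ 3 * h2⟩

variable [IsDomain K]

lemma card_pairs_of_eq_zero {b : K} (hb : b ≠ 0) :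
    Nat.card {p : K × K // p.1 ^ 2 + p.1 * p.2 + p.2 ^ 2 = b ^ 2 ∧ p.1 * p.2 * (p.1 + p.2) = 0}
      = 3 := by
  classical
  have h2 : (2 : K) = 0 := CharTwo.two_eq_zero
  have hsq {u v : K} (h : u ^ 2 = v ^ 2) : u = v := frobenius_inj K 2 h
  have hmem (p : K × K) : (p.1 ^ 2 + p.1 * p.2 + p.2 ^ 2 = b ^ 2 ∧ p.1 * p.2 * (p.1 + p.2) = 0) ↔
      p ∈ ({(b, b), (0, b), (b, 0)} : Finset (K × K)) := by
    obtain ⟨s, t⟩ := p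
    simp only [Finset.mem_insert, Finset.mem_singleton, Prod.mk.injEq]
    constructor
    · rintro ⟨hc, he⟩
      rcases mul_eq_zero.1 he with hst | hst
      · rcases mul_eq_zero.1 hst with rfl | rfl
        · exact Or.inr (Or.inl ⟨rfl, hsq (by linear_combination hc)⟩)
        · exact Or.inr (Or.inr ⟨hsq (by linear_combination hc), rfl⟩)
      · obtain rfl : t = s := by linear_combination hst - s * h2
        obtain rfl : t = b := hsq (by linear_combination hc - t ^ 2 * h2)
        exact Or.inl ⟨rfl, rfl⟩
    · rintro (⟨hs, ht⟩ | ⟨hs, ht⟩ | ⟨hs, ht⟩) <;> rw [hs, ht]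
      · exact ⟨by linear_combination b ^ 2 * h2, by linear_combination b ^ 3 * h2⟩
      · simp
      · simp
  rw [Nat.card_congr (Equiv.subtypeEquivRight hmem), Nat.card_eq_fintype_card, Fintype.card_coe,
    Finset.card_insert_of_notMem (by simp [hb]), Finset.card_pair (by simp [hb])]

lemma pair_eqs_of_roots {s σ c e : K} (hs : s ^ 3 + c * s + e = 0) (hσ : σ ^ 3 + c * σ + e = 0)
    (hne : s ≠ σ) :
    s ^ 2 + s * (s + σ) + (s + σ) ^ 2 = c ∧ s * (s + σ) * (s + (s + σ)) = e := by
  have h2 : (2 : K) = 0 := CharTwo.two_eq_zero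
  have hsum : s ^ 2 + s * σ + σ ^ 2 + c = 0 := by
    have : (s - σ) * (s ^ 2 + s * σ + σ ^ 2 + c) = 0 := by linear_combination hs - hσ
    exact (mul_eq_zero.1 this).resolve_left (sub_ne_zero.2 hne)
  exact ⟨by linear_combination hsum + (s ^ 2 + s * σ - c) * h2,
    by linear_combination -hs + s * hsum + (s ^ 3 + s ^ 2 * σ) * h2⟩

def pairsEquivDistinctRoots {c e : K} (he : e ≠ 0) :
    {p : K × K // p.1 ^ 2 + p.1 * p.2 + p.2 ^ 2 = c ∧ p.1 * p.2 * (p.1 + p.2) = e} ≃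
    {r : {z : K // z ^ 3 + c * z + e = 0} × {z : K // z ^ 3 + c * z + e = 0} // r.1 ≠ r.2} where
  toFun p := ⟨(⟨p.1.1, (roots_of_pair_eqs p.2.1 p.2.2).1⟩,
      ⟨p.1.1 + p.1.2, (roots_of_pair_eqs p.2.1 p.2.2).2⟩),
    fun h ↦ he <| by
      have ht : p.1.2 = 0 := by simpa using congrArg Subtype.val h
      rw [← p.2.2, ht, mul_zero, zero_mul]⟩
  invFun r := ⟨(r.1.1.1, r.1.1.1 + r.1.2.1),
    pair_eqs_of_roots r.1.1.2 r.1.2.2 fun h ↦ r.2 (Subtype.ext h)⟩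
  left_inv := by
    rintro ⟨⟨s, t⟩, -⟩
    ext
    · rfl
    · linear_combination s * (CharTwo.two_eq_zero : (2 : K) = 0)
  right_inv := by
    rintro ⟨⟨⟨s, -⟩, ⟨σ, -⟩⟩, -⟩
    ext
    · rfl
    · linear_combination s * (CharTwo.two_eq_zero : (2 : K) = 0)

lemma card_pairs_of_ne_zero [Finite K] {c e : K} (he : e ≠ 0) :
    Nat.card {p : K × K // p.1 ^ 2 + p.1 * p.2 + p.2 ^ 2 = c ∧ p.1 * p.2 * (p.1 + p.2) = e} =
      Nat.card {z : K // z ^ 3 + c * z + e = 0} * Nat.card {z : K // z ^ 3 + c * z + e = 0} -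
        Nat.card {z : K // z ^ 3 + c * z + e = 0} := by
  rw [Nat.card_congr (pairsEquivDistinctRoots he), Nat.card_subtype_fst_ne_snd]

end CharTwo

lemma exists_eq_two_smul_of_two_smul_eq_zero {ι M : Type*} [AddCommGroup M] [Module (ZMod 4) M]
    (b : Module.Basis ι (ZMod 4) M) {r : M} (hr : (2 : ZMod 4) • r = 0) :
    ∃ s, r = (2 : ZMod 4) • s := by
  have hhalf : ∀ c : ZMod 4, 2 * c = 0 → c = 2 * (c.val / 2 : ℕ) := by decide
  refine ⟨b.repr.symm (Finsupp.mapRange (fun c : ZMod 4 ↦ ((c.val / 2 : ℕ) : ZMod 4)) rfl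
    (b.repr r)), b.repr.injective ?_⟩
  ext i
  simp only [map_smul, LinearEquiv.apply_symm_apply, Finsupp.smul_apply, smul_eq_mul]
  exact hhalf _ (by simpa using congr(b.repr $hr i))

section GaloisRing

noncomputable def resFieldEquiv (f : (ZMod 4)[X]) :
    ResField f ≃+* AdjoinRoot (f.map (ZMod.castHom (show (2:ℕ) ∣ 4 by norm_num) (ZMod 2))) :=
  let ρ := ZMod.castHom (show (2:ℕ) ∣ 4 by norm_num) (ZMod 2)
  have hker : Ideal.span {2} = RingHom.ker ρ := by
    ext x
    rw [RingHom.mem_ker, Ideal.mem_span_singleton]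
    revert x
    decide
  (Ideal.quotEquivOfEq (by rw [← hker, Ideal.map_span, Set.image_singleton, map_ofNat])).trans <|
    (AdjoinRoot.quotAdjoinRootEquivQuotPolynomialQuot _ f).trans <|
      Ideal.quotientEquiv _ _
        (mapEquiv (RingHom.quotientKerEquivOfSurjective (ZMod.ringHom_surjective ρ))) <| by
          rw [Ideal.map_span, Set.image_singleton, RingEquiv.coe_toRingHom, mapEquiv_apply,
            Polynomial.map_map]
          exact congrArg (fun φ : ZMod 4 →+* ZMod 2 ↦ Ideal.span {f.map φ}) (Subsingleton.elim _ _)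

variable {f : (ZMod 4)[X]}

lemma isMaximal_span_two
    (hirr : Irreducible (f.map (ZMod.castHom (show (2:ℕ) ∣ 4 by norm_num) (ZMod 2)))) :
    (Ideal.span {2} : Ideal (AdjoinRoot f)).IsMaximal :=
  have := Fact.mk hirr
  Ideal.Quotient.maximal_of_isField _ <|
    MulEquiv.isField (Field.toIsField _) (resFieldEquiv f).toMulEquiv

lemma natCard_resField (hf : f.Monic) : Nat.card (ResField f) = 2 ^ f.natDegree := by
  have hf' := hf.map (ZMod.castHom (show (2:ℕ) ∣ 4 by norm_num) (ZMod 2))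
  rw [Nat.card_congr (resFieldEquiv f).toEquiv,
    Nat.card_congr (AdjoinRoot.powerBasis' hf').basis.equivFun.toEquiv, Nat.card_fun,
    AdjoinRoot.powerBasis'_dim, hf.natDegree_map]
  simp

lemma charP_resField [(Ideal.span {2} : Ideal (AdjoinRoot f)).IsMaximal] :
    CharP (ResField f) 2 :=
  CharTwo.of_one_ne_zero_of_two_eq_zero one_ne_zero <| by
    rw [← map_ofNat (muRed f) 2]
    exact Ideal.Quotient.eq_zero_iff_mem.2 (Ideal.mem_span_singleton_self 2)

lemma isReductionModTwo_muRed (hf : f.Monic) : IsReductionModTwo (muRed f) where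
  four_eq_zero := by
    rw [← map_ofNat (AdjoinRoot.of f) 4, show (4 : ZMod 4) = 0 by decide, map_zero]
  surjective := Ideal.Quotient.mk_surjective
  two_dvd_of_map_eq_zero _ h := Ideal.mem_span_singleton.1 (Ideal.Quotient.eq_zero_iff_mem.1 h)
  two_dvd_of_two_mul_eq_zero r h := by
    obtain ⟨s, hs⟩ := exists_eq_two_smul_of_two_smul_eq_zero (AdjoinRoot.powerBasis' hf).basis
      (r := r) (by rwa [two_smul, ← two_mul])
    exact ⟨s, by rwa [two_smul, ← two_mul] at hs⟩

end GaloisRing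

/-- For `B ∈ 𝒯` with `B ≠ 0` and `d ∈ 𝔽_q`, the number of quadruples
`(X,Y,Z,W) ∈ 𝒯⁴` with `X + Y + Z + W = 2B` in `R` and `x³ + y³ + z³ + w³ = b³·d` in `𝔽_q`
equals `3·2^m` if `d = 0`, `0` if `d ∈ M₀ ∪ M₁`, and `6·2^m` if `d ∈ M₃`. -/
theorem statement16 (m : ℕ)
    (f : Polynomial (ZMod 4)) (hmonic : f.Monic) (hdeg : f.natDegree = m)
    (hirr : Irreducible (f.map (ZMod.castHom (show (2:ℕ) ∣ 4 by norm_num) (ZMod 2))))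
    (B : AdjoinRoot f) (hB : B ^ 2 ^ m = B) (hB0 : B ≠ 0)
    (d : ResField f) :
    (d = 0 →
      Nat.card {t : AdjoinRoot f × AdjoinRoot f × AdjoinRoot f × AdjoinRoot f //
        (t.1 ^ 2 ^ m = t.1 ∧ t.2.1 ^ 2 ^ m = t.2.1 ∧ t.2.2.1 ^ 2 ^ m = t.2.2.1 ∧
          t.2.2.2 ^ 2 ^ m = t.2.2.2) ∧
        t.1 + t.2.1 + t.2.2.1 + t.2.2.2 = 2 * B ∧ muRed f t.1 ^ 3 + muRed f t.2.1 ^ 3 + muRed f t.2.2.1 ^ 3 + muRed f t.2.2.2 ^ 3 = muRed f B ^ 3 * d} = 3 * 2 ^ m) ∧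
    (d ≠ 0 → (cubicRoots f d = 0 ∨ cubicRoots f d = 1) →
      Nat.card {t : AdjoinRoot f × AdjoinRoot f × AdjoinRoot f × AdjoinRoot f //
        (t.1 ^ 2 ^ m = t.1 ∧ t.2.1 ^ 2 ^ m = t.2.1 ∧ t.2.2.1 ^ 2 ^ m = t.2.2.1 ∧
          t.2.2.2 ^ 2 ^ m = t.2.2.2) ∧
        t.1 + t.2.1 + t.2.2.1 + t.2.2.2 = 2 * B ∧ muRed f t.1 ^ 3 + muRed f t.2.1 ^ 3 + muRed f t.2.2.1 ^ 3 + muRed f t.2.2.2 ^ 3 = muRed f B ^ 3 * d} = 0) ∧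
    (d ≠ 0 → cubicRoots f d = 3 →
      Nat.card {t : AdjoinRoot f × AdjoinRoot f × AdjoinRoot f × AdjoinRoot f //
        (t.1 ^ 2 ^ m = t.1 ∧ t.2.1 ^ 2 ^ m = t.2.1 ∧ t.2.2.1 ^ 2 ^ m = t.2.2.1 ∧
          t.2.2.2 ^ 2 ^ m = t.2.2.2) ∧
        t.1 + t.2.1 + t.2.2.1 + t.2.2.2 = 2 * B ∧ muRed f t.1 ^ 3 + muRed f t.2.1 ^ 3 + muRed f t.2.2.1 ^ 3 + muRed f t.2.2.2 ^ 3 = muRed f B ^ 3 * d} = 6 * 2 ^ m) := by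
  have := isMaximal_span_two hirr
  let := Ideal.Quotient.field (Ideal.span {(2 : AdjoinRoot f)})
  have : CharP (ResField f) 2 := charP_resField
  have hcard : Nat.card (ResField f) = 2 ^ m := hdeg ▸ natCard_resField hmonic
  have : Finite (ResField f) := Nat.finite_of_card_ne_zero (by simp [hcard])
  have hμ := isReductionModTwo_muRed hmonic
  rw [← hcard] at hB ⊢
  have hb : muRed f B ≠ 0 := fun h ↦
    hB0 (by rw [← hμ.teichmullerLift_map hB, h, hμ.teichmullerLift_zero])
  rw [Nat.card_congr (hμ.teichmullerQuadruplesEquiv hB fun x y z w ↦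
    x ^ 3 + y ^ 3 + z ^ 3 + w ^ 3 = muRed f B ^ 3 * d), card_quadruples]
  unfold cubicRoots
  refine ⟨fun hd ↦ ?_, fun hd hN ↦ ?_, fun hd hN ↦ ?_⟩
  · rw [hd, mul_zero, card_pairs_of_eq_zero hb]
  all_goals
    rw [card_pairs_of_ne_zero (mul_ne_zero (pow_ne_zero 3 hb) hd), card_roots_cubic_scale hb]
  · rcases hN with hN | hN <;> simp [hN]
  · simp [hN]
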